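/- arXiv:1503.07848 — 13 statements merged into one kernel-verified Lean document; each statement's English description precedes it below -/
import Mathlib

section
/- Let i ≥ 1 and let l_1, …, l_i and m_1, …, m_i be nonnegative integers. For j = 1, …, i let C_j denote the digit block consisting of '21' followed by l_j nines followed by '78', and let Z_j denote a block of m_j zeros. If M is the positive integer whose big-endian decimal digit string is either the palindromic concatenation C_1 Z_1 C_2 Z_2 … C_{i-1} Z_{i-1} C_i Z_i C_i Z_{i-1} C_{i-1} … Z_1 C_1 (with 2i blocks C and central zero block Z_i) or the palindromic concatenation C_1 Z_1 … C_{i-1} Z_{i-1} C_i Z_{i-1} C_{i-1} … Z_1 C_1 (with 2i−1 blocks C and central block C_i), then M is a (10,4)-reverse multiple. -/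
/-- The big-endian digit block `21 9…9 78` with `l` nines. -/
def cBlock4 (l : ℕ) : List ℕ := [2, 1] ++ List.replicate l 9 ++ [7, 8]

/-- A block of `m` zero digits. -/
def zBlock (m : ℕ) : List ℕ := List.replicate m 0

/-- The big-endian digit string
`C_1 Z_1 … C_{i-1} Z_{i-1} C_i Z_i C_i Z_{i-1} C_{i-1} … Z_1 C_1`
(with `2 * i` blocks `C` and central zero block `Z_i`), where `C_j` is the block
`21 9…9 78` with `l j` nines and `Z_j` is a block of `m j` zeros (indices `1, …, i`). -/
def evenString4 (i : ℕ) (l m : ℕ → ℕ) : List ℕ :=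
  ((List.range i).map fun j => cBlock4 (l (j + 1)) ++ zBlock (m (j + 1))).flatten ++
    cBlock4 (l i) ++
    (((List.range (i - 1)).map fun j =>
        zBlock (m (j + 1)) ++ cBlock4 (l (j + 1))).reverse).flatten

/-- The big-endian digit string
`C_1 Z_1 … C_{i-1} Z_{i-1} C_i Z_{i-1} C_{i-1} … Z_1 C_1`
(with `2 * i - 1` blocks `C` and central block `C_i`). -/
def oddString4 (i : ℕ) (l m : ℕ → ℕ) : List ℕ :=
  ((List.range (i - 1)).map fun j => cBlock4 (l (j + 1)) ++ zBlock (m (j + 1))).flatten ++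
    cBlock4 (l i) ++
    (((List.range (i - 1)).map fun j =>
        zBlock (m (j + 1)) ++ cBlock4 (l (j + 1))).reverse).flatten

/-- A big-endian digit string `S` is *good* if multiplying the number it represents by 4
yields the number represented by its reversal, all its digits are `< 10`, and it ends in `8`. -/
def rm_good (S : List ℕ) : Prop :=
  4 * Nat.ofDigits 10 S.reverse = Nat.ofDigits 10 S ∧ (∀ d ∈ S, d < 10) ∧ ∃ S', S = S' ++ [8]

lemma rm_rep9 (n : ℕ) : Nat.ofDigits 10 (List.replicate n 9) + 1 = 10 ^ n := by
  induction n with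
  | zero => simp [Nat.ofDigits]
  | succ k ih =>
      rw [List.replicate_succ, Nat.ofDigits_cons, pow_succ]
      omega

lemma rm_ofD_z (m : ℕ) : Nat.ofDigits 10 (zBlock m) = 0 := by
  induction m with
  | zero => simp [zBlock, Nat.ofDigits]
  | succ k ih => rw [zBlock, List.replicate_succ, Nat.ofDigits_cons]; simpa [zBlock] using ih

lemma rm_z_rev (m : ℕ) : (zBlock m).reverse = zBlock m := by simp [zBlock]

lemma rm_c_rev (l : ℕ) : (cBlock4 l).reverse = [8, 7] ++ List.replicate l 9 ++ [1, 2] := by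
  simp [cBlock4]

lemma rm_ofD_c (l : ℕ) : Nat.ofDigits 10 (cBlock4 l) = 8800 * 10 ^ l - 88 := by
  have h9 := rm_rep9 l
  simp [cBlock4, Nat.ofDigits_append, Nat.ofDigits_cons, Nat.ofDigits_nil]
  omega

lemma rm_ofD_crev (l : ℕ) : Nat.ofDigits 10 (cBlock4 l).reverse = 2200 * 10 ^ l - 22 := by
  have h9 := rm_rep9 l
  rw [rm_c_rev]
  simp [Nat.ofDigits_append, Nat.ofDigits_cons, Nat.ofDigits_nil]
  omega

lemma rm_key (l : ℕ) : 4 * Nat.ofDigits 10 (cBlock4 l).reverse = Nat.ofDigits 10 (cBlock4 l) := by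
  rw [rm_ofD_c, rm_ofD_crev]
  have h9 := rm_rep9 l
  omega

lemma rm_c_lt (l : ℕ) : ∀ d ∈ cBlock4 l, d < 10 := by
  intro d hd
  simp [cBlock4, List.mem_replicate] at hd
  rcases hd with h | h | h | h | h <;> omega

lemma rm_c_last (l : ℕ) : ∃ S', cBlock4 l = S' ++ [8] :=
  ⟨[2, 1] ++ List.replicate l 9 ++ [7], by simp [cBlock4]⟩

lemma rm_gC (l : ℕ) : rm_good (cBlock4 l) := ⟨rm_key l, rm_c_lt l, rm_c_last l⟩

lemma rm_gCZC (a b : ℕ) : rm_good (cBlock4 a ++ (zBlock b ++ cBlock4 a)) := by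
  refine ⟨?_, ?_, ?_⟩
  · rw [show (cBlock4 a ++ (zBlock b ++ cBlock4 a)).reverse
        = (cBlock4 a).reverse ++ (zBlock b ++ (cBlock4 a).reverse) by simp [rm_z_rev]]
    simp only [Nat.ofDigits_append, rm_ofD_z, List.length_reverse]
    have hk := rm_key a
    ring_nf
    ring_nf at hk
    rw [← hk]
    ring
  · intro d hd
    simp only [List.mem_append] at hd
    rcases hd with h | h | h
    · exact rm_c_lt a d h
    · simp [zBlock, List.mem_replicate] at h; omega
    · exact rm_c_lt a d h
  · obtain ⟨S', hS'⟩ := rm_c_last a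
    exact ⟨cBlock4 a ++ zBlock b ++ S', by rw [hS']; simp⟩

lemma rm_gwrap (a b : ℕ) (S : List ℕ) (hS : rm_good S) :
    rm_good (cBlock4 a ++ (zBlock b ++ (S ++ (zBlock b ++ cBlock4 a)))) := by
  obtain ⟨h1, h2, h3⟩ := hS
  refine ⟨?_, ?_, ?_⟩
  · rw [show (cBlock4 a ++ (zBlock b ++ (S ++ (zBlock b ++ cBlock4 a)))).reverse
        = (cBlock4 a).reverse ++ (zBlock b ++ (S.reverse ++ (zBlock b ++ (cBlock4 a).reverse)))
        by simp [rm_z_rev]]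
    simp only [Nat.ofDigits_append, rm_ofD_z, List.length_reverse]
    have hk := rm_key a
    rw [← h1, ← hk]
    ring
  · intro d hd
    simp only [List.mem_append] at hd
    rcases hd with h | h | h | h | h
    · exact rm_c_lt a d h
    · simp [zBlock, List.mem_replicate] at h; omega
    · exact h2 d h
    · simp [zBlock, List.mem_replicate] at h; omega
    · exact rm_c_lt a d h
  · obtain ⟨S', hS'⟩ := rm_c_last a
    exact ⟨cBlock4 a ++ (zBlock b ++ (S ++ (zBlock b ++ S'))), by rw [hS']; simp⟩

lemma rm_head_succ (g : ℕ → List ℕ) (k : ℕ) :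
    ((List.range (k + 1)).map g).flatten = g 0 ++ ((List.range k).map (fun j => g (j + 1))).flatten := by
  rw [List.range_succ_eq_map]
  simp [Function.comp_def]

lemma rm_tail_succ (g : ℕ → List ℕ) (k : ℕ) :
    ((List.range (k + 1)).map g).reverse.flatten =
      ((List.range k).map (fun j => g (j + 1))).reverse.flatten ++ g 0 := by
  rw [List.range_succ_eq_map]
  simp [Function.comp_def]

lemma rm_even_one (l m : ℕ → ℕ) :
    evenString4 1 l m = cBlock4 (l 1) ++ (zBlock (m 1) ++ cBlock4 (l 1)) := by
  rw [evenString4, rm_head_succ (fun j => cBlock4 (l (j + 1)) ++ zBlock (m (j + 1))) 0]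
  simp [List.append_assoc]

lemma rm_odd_one (l m : ℕ → ℕ) : oddString4 1 l m = cBlock4 (l 1) := by
  simp [oddString4]

lemma rm_even_succ (k : ℕ) (l m : ℕ → ℕ) :
    evenString4 (k + 2) l m =
      cBlock4 (l 1) ++ (zBlock (m 1) ++
        (evenString4 (k + 1) (fun j => l (j + 1)) (fun j => m (j + 1)) ++
          (zBlock (m 1) ++ cBlock4 (l 1)))) := by
  rw [evenString4, show k+2-1 = k+1 from rfl,
    rm_head_succ (fun j => cBlock4 (l (j + 1)) ++ zBlock (m (j + 1))) (k + 1),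
    rm_tail_succ (fun j => zBlock (m (j + 1)) ++ cBlock4 (l (j + 1))) k]
  rw [evenString4, Nat.add_sub_cancel]
  simp [List.append_assoc]

lemma rm_odd_succ (k : ℕ) (l m : ℕ → ℕ) :
    oddString4 (k + 2) l m =
      cBlock4 (l 1) ++ (zBlock (m 1) ++
        (oddString4 (k + 1) (fun j => l (j + 1)) (fun j => m (j + 1)) ++
          (zBlock (m 1) ++ cBlock4 (l 1)))) := by
  rw [oddString4, show k+2-1 = k+1 from rfl,
    rm_head_succ (fun j => cBlock4 (l (j + 1)) ++ zBlock (m (j + 1))) k,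
    rm_tail_succ (fun j => zBlock (m (j + 1)) ++ cBlock4 (l (j + 1))) k]
  rw [oddString4, Nat.add_sub_cancel]
  simp [List.append_assoc]

lemma rm_good_even : ∀ k (l m : ℕ → ℕ), rm_good (evenString4 (k + 1) l m) := by
  intro k
  induction k with
  | zero => intro l m; rw [rm_even_one]; exact rm_gCZC _ _
  | succ n ih =>
      intro l m
      rw [rm_even_succ]
      exact rm_gwrap _ _ _ (ih _ _)

lemma rm_good_odd : ∀ k (l m : ℕ → ℕ), rm_good (oddString4 (k + 1) l m) := by
  intro k
  induction k with
  | zero => intro l m; rw [rm_odd_one]; exact rm_gC _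
  | succ n ih =>
      intro l m
      rw [rm_odd_succ]
      exact rm_gwrap _ _ _ (ih _ _)

lemma rm_final (M : ℕ) (S : List ℕ) (hg : rm_good S)
    (h : (Nat.digits 10 M).reverse = S) :
    (Nat.digits 10 M).reverse = Nat.digits 10 (4 * M) := by
  obtain ⟨h1, h2, S', h3⟩ := hg
  have hd : Nat.digits 10 M = S.reverse := by rw [← h, List.reverse_reverse]
  have hM : Nat.ofDigits 10 S.reverse = M := by rw [← hd, Nat.ofDigits_digits]
  have h4 : 4 * M = Nat.ofDigits 10 S := by rw [← h1, hM]
  rw [h, h4]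
  refine (Nat.digits_ofDigits 10 (by norm_num) S h2 ?_).symm
  intro hne
  subst h3
  simp [List.getLast_append]

/-- If the big-endian decimal digit string of a positive integer `M` is one of the two
palindromic block concatenations built from blocks `C_j = 21 9…9 78` (with `l j` nines)
and zero blocks `Z_j` (of `m j` zeros), then `M` is a `(10, 4)`-reverse multiple. -/
theorem stmt_1 (i : ℕ) (hi : 1 ≤ i) (l m : ℕ → ℕ) (M : ℕ) (hM : 0 < M)
    (h : (Nat.digits 10 M).reverse = evenString4 i l m ∨
         (Nat.digits 10 M).reverse = oddString4 i l m) :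
    (Nat.digits 10 M).reverse = Nat.digits 10 (4 * M) := by
  obtain ⟨k, rfl⟩ : ∃ k, i = k + 1 := ⟨i - 1, by omega⟩
  rcases h with h | h
  · exact rm_final M _ (rm_good_even k l m) h
  · exact rm_final M _ (rm_good_odd k l m) h
end

section
/- For every nonnegative integer l, the number M = 22·(10^(l+2) − 1), whose decimal expansion is '21' followed by l nines followed by '78', is a (10,4)-reverse multiple; that is, the reversal of the decimal digits of M is the decimal digit expansion of 4·M. -/
lemma nines_digits (n : ℕ) (hn : 0 < n) (l : ℕ) :
    Nat.digits 10 ((n + 1) * 10 ^ l - 1) = List.replicate l 9 ++ Nat.digits 10 n := by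
  induction l with
  | zero => simp
  | succ l ih =>
    have h1 : 0 < (n + 1) * 10 ^ l := by positivity
    have key : (n + 1) * 10 ^ (l + 1) - 1 = 10 * ((n + 1) * 10 ^ l - 1) + 9 := by
      have : (n + 1) * 10 ^ (l + 1) = 10 * ((n + 1) * 10 ^ l) := by ring
      omega
    rw [key, Nat.digits_def' (by norm_num : (1:ℕ) < 10) (by omega)]
    have h2 : (10 * ((n + 1) * 10 ^ l - 1) + 9) % 10 = 9 := by omega
    have h3 : (10 * ((n + 1) * 10 ^ l - 1) + 9) / 10 = (n + 1) * 10 ^ l - 1 := by omega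
    rw [h2, h3, ih, List.replicate_succ, List.cons_append]

lemma peel2 (x a b : ℕ) (hx : 0 < x) (ha : a < 10) (hb : b < 10) :
    Nat.digits 10 (100 * x + 10 * b + a) = a :: b :: Nat.digits 10 x := by
  rw [Nat.digits_def' (by norm_num : (1:ℕ) < 10) (by omega)]
  have h1 : (100 * x + 10 * b + a) % 10 = a := by omega
  have h2 : (100 * x + 10 * b + a) / 10 = 10 * x + b := by omega
  rw [h1, h2, Nat.digits_def' (by norm_num : (1:ℕ) < 10) (by omega)]
  have h3 : (10 * x + b) % 10 = b := by omega
  have h4 : (10 * x + b) / 10 = x := by omega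
  rw [h3, h4]

/-- For every `l : ℕ`, the number `M = 22 * (10 ^ (l + 2) - 1)`, whose decimal
expansion is `21` followed by `l` nines followed by `78`, is a `(10, 4)`-reverse
multiple. -/
theorem stmt_3 (l : ℕ) :
    (Nat.digits 10 (22 * (10 ^ (l + 2) - 1))).reverse =
        [2, 1] ++ List.replicate l 9 ++ [7, 8] ∧
      (Nat.digits 10 (22 * (10 ^ (l + 2) - 1))).reverse =
        Nat.digits 10 (4 * (22 * (10 ^ (l + 2) - 1))) := by
  have hp : 0 < 10 ^ l := by positivity
  have h22 : 0 < 22 * 10 ^ l - 1 := by omega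
  have h88 : 0 < 88 * 10 ^ l - 1 := by omega
  have eM : 22 * (10 ^ (l + 2) - 1) = 100 * (22 * 10 ^ l - 1) + 10 * 7 + 8 := by
    have : 10 ^ (l + 2) = 100 * 10 ^ l := by ring
    rw [this]; omega
  have e4M : 4 * (22 * (10 ^ (l + 2) - 1)) = 100 * (88 * 10 ^ l - 1) + 10 * 1 + 2 := by
    have : 10 ^ (l + 2) = 100 * 10 ^ l := by ring
    rw [this]; omega
  have d22 : Nat.digits 10 (22 * 10 ^ l - 1) = List.replicate l 9 ++ [1, 2] := by
    have := nines_digits 21 (by norm_num) l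
    norm_num at this
    rw [this]
  have d88 : Nat.digits 10 (88 * 10 ^ l - 1) = List.replicate l 9 ++ [7, 8] := by
    have := nines_digits 87 (by norm_num) l
    norm_num at this
    rw [this]
  have dM : Nat.digits 10 (22 * (10 ^ (l + 2) - 1))
      = 8 :: 7 :: (List.replicate l 9 ++ [1, 2]) := by
    rw [eM, peel2 _ _ _ h22 (by norm_num) (by norm_num), d22]
  have d4M : Nat.digits 10 (4 * (22 * (10 ^ (l + 2) - 1)))
      = 2 :: 1 :: (List.replicate l 9 ++ [7, 8]) := by
    rw [e4M, peel2 _ _ _ h88 (by norm_num) (by norm_num), d88]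
  rw [dM, d4M]
  constructor <;> simp [List.reverse_replicate]
end

section
/- For every nonnegative integer l, the number M = 11·(10^(l+2) − 1), whose decimal expansion is '10' followed by l nines followed by '89', is a (10,9)-reverse multiple; that is, the reversal of the decimal digits of M is the decimal digit expansion of 9·M. -/
lemma rep_ofDigits (l : ℕ) (L : List ℕ) :
    Nat.ofDigits 10 (List.replicate l 9 ++ L) + 1 = 10 ^ l * (Nat.ofDigits 10 L + 1) := by
  induction l with
  | zero => simp
  | succ n ih =>
    simp only [List.replicate_succ, List.cons_append, Nat.ofDigits_cons, Nat.cast_id,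
      Nat.cast_ofNat, pow_succ]
    rw [mul_comm ((10:ℕ) ^ n) 10, mul_assoc, ← ih]
    ring

lemma digits_M (l : ℕ) :
    Nat.digits 10 (11 * (10 ^ (l + 2) - 1)) = [9, 8] ++ List.replicate l 9 ++ [0, 1] := by
  have h1 : Nat.ofDigits 10 ([9, 8] ++ List.replicate l 9 ++ [0, 1])
      = 11 * (10 ^ (l + 2) - 1) := by
    have h := rep_ofDigits l [0, 1]
    simp only [List.cons_append, List.nil_append, Nat.ofDigits_cons, Nat.ofDigits_nil,
      Nat.cast_id, Nat.cast_ofNat] at h ⊢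
    have hp : (10:ℕ) ^ (l + 2) = 100 * 10 ^ l := by ring
    omega
  rw [← h1]
  apply Nat.digits_ofDigits _ (by norm_num)
  · intro x hx
    simp at hx
    omega
  · intro h
    simp [List.getLast_append]

lemma digits_9M (l : ℕ) :
    Nat.digits 10 (9 * (11 * (10 ^ (l + 2) - 1))) = [1, 0] ++ List.replicate l 9 ++ [8, 9] := by
  have h1 : Nat.ofDigits 10 ([1, 0] ++ List.replicate l 9 ++ [8, 9])
      = 9 * (11 * (10 ^ (l + 2) - 1)) := by
    have h := rep_ofDigits l [8, 9]
    simp only [List.cons_append, List.nil_append, Nat.ofDigits_cons, Nat.ofDigits_nil,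
      Nat.cast_id, Nat.cast_ofNat] at h ⊢
    have hp : (10:ℕ) ^ (l + 2) = 100 * 10 ^ l := by ring
    omega
  rw [← h1]
  apply Nat.digits_ofDigits _ (by norm_num)
  · intro x hx
    simp at hx
    omega
  · intro h
    simp [List.getLast_append]

/-- For every `l : ℕ`, the number `M = 11 * (10 ^ (l + 2) - 1)`, whose decimal
expansion is `10` followed by `l` nines followed by `89`, is a `(10, 9)`-reverse
multiple. -/
theorem stmt_4 (l : ℕ) :
    (Nat.digits 10 (11 * (10 ^ (l + 2) - 1))).reverse =
        [1, 0] ++ List.replicate l 9 ++ [8, 9] ∧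
      (Nat.digits 10 (11 * (10 ^ (l + 2) - 1))).reverse =
        Nat.digits 10 (9 * (11 * (10 ^ (l + 2) - 1))) := by
  rw [digits_M, digits_9M]
  constructor <;> simp [List.reverse_replicate]
end

section
/- Let k be an integer with 1 ≤ k ≤ 9 and let M be a positive (10,k)-reverse multiple with exactly d decimal digits (d = (Nat.digits 10 M).length). Then for every nonnegative integer m, the number N = M·10^(d+m) + M, whose decimal digit string is that of M, followed by m zeros, followed by that of M again, is also a (10,k)-reverse multiple. -/
/-- If `M` is a positive `(10, k)`-reverse multiple with `d` decimal digits, then for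
every `m : ℕ` the number `M * 10 ^ (d + m) + M` (the digit string of `M`, followed by
`m` zeros, followed by the digit string of `M` again) is also a `(10, k)`-reverse
multiple. -/
theorem stmt_5 (k M : ℕ) (hk1 : 1 ≤ k) (hk9 : k ≤ 9) (hM : 0 < M)
    (hrev : (Nat.digits 10 M).reverse = Nat.digits 10 (k * M))
    (d : ℕ) (hd : d = (Nat.digits 10 M).length) (m : ℕ) :
    (Nat.digits 10 (M * 10 ^ (d + m) + M)).reverse =
      Nat.digits 10 (k * (M * 10 ^ (d + m) + M)) := by
  have hb : (1:ℕ) < 10 := by norm_num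
  have hkM : 0 < k * M := Nat.mul_pos hk1 hM
  have hlen : (Nat.digits 10 (k * M)).length = d := by
    rw [← hrev, List.length_reverse, hd]
  have h1 : Nat.digits 10 (M * 10 ^ (d + m) + M) =
      Nat.digits 10 M ++ List.replicate m 0 ++ Nat.digits 10 M := by
    rw [Nat.digits_append_zeroes_append_digits hb hM, ← hd]
    ring_nf
  have h2 : Nat.digits 10 (k * (M * 10 ^ (d + m) + M)) =
      Nat.digits 10 (k * M) ++ List.replicate m 0 ++ Nat.digits 10 (k * M) := by
    rw [Nat.digits_append_zeroes_append_digits hb hkM, hlen]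
    ring_nf
  rw [h1, h2, List.reverse_append, List.reverse_append, List.reverse_replicate, hrev,
    List.append_assoc]
end

section
/- There is no positive (10,2)-reverse multiple; that is, there is no positive integer M such that the reversal of the decimal digit expansion of M equals the decimal digit expansion of 2·M. -/
/-!
Let `a` be the units digit and `c` the leading digit of `M`, and let `P = 10 ^ k` be the place
value of the leading digit, so that `c = M / P`. Since the digits of `2 * M` are those of `M`
reversed, `2 * M` has the same length, its leading digit is `a` and its units digit is `c`.
Comparing leading digits, `2 * c ≤ a ≤ 2 * c + 1`, while comparing units digits,
`c ≡ 2 * a [MOD 10]` with `a ≠ 0`; no pair of digits satisfies both.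
-/

namespace Nat

theorem getLast_digits_eq_div_pow {b n : ℕ} (hb : 2 ≤ b) (h : b.digits n ≠ []) :
    (b.digits n).getLast h = n / b ^ ((b.digits n).length - 1) := by
  rw [self_div_pow_eq_ofDigits_drop _ _ hb, List.drop_length_sub_one h, ofDigits_singleton]

theorem div_pow_length_digits_sub_one_ne_zero {b n : ℕ} (hb : 2 ≤ b) (hn : n ≠ 0) :
    n / b ^ ((b.digits n).length - 1) ≠ 0 := by
  rw [← getLast_digits_eq_div_pow hb (digits_ne_nil_iff_ne_zero.mpr hn)]
  exact getLast_digit_ne_zero b hn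

theorem div_pow_eq_mod_of_digits_reverse {b M N : ℕ} (hb : 2 ≤ b) (hM : M ≠ 0)
    (h : (b.digits M).reverse = b.digits N) :
    N / b ^ ((b.digits N).length - 1) = M % b := by
  have hN : b.digits N ≠ [] :=
    h ▸ List.reverse_ne_nil_iff.mpr (digits_ne_nil_iff_ne_zero.mpr hM)
  rw [← getLast_digits_eq_div_pow hb hN]
  simp only [← h, List.getLast_reverse, digits_def' hb (pos_of_ne_zero hM), List.head_cons]

theorem mul_div_lt_mul_div_add (k M : ℕ) {P : ℕ} (hk : 0 < k) (hP : 0 < P) :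
    k * M / P < k * (M / P) + k := by
  rw [div_lt_iff_lt_mul hP, ← mul_add_one, mul_assoc, mul_comm _ P]
  exact Nat.mul_lt_mul_of_pos_left (lt_mul_div_succ M hP) hk

end Nat

/-- There is no positive `(10, 2)`-reverse multiple. -/
theorem stmt_6 :
    ¬ ∃ M : ℕ, 0 < M ∧ (Nat.digits 10 M).reverse = Nat.digits 10 (2 * M) := by
  rintro ⟨M, hM, h⟩
  have hlen : (Nat.digits 10 M).length = (Nat.digits 10 (2 * M)).length := by
    rw [← h, List.length_reverse]
  set P := 10 ^ ((Nat.digits 10 (2 * M)).length - 1)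
  have hlead_two_mul : 2 * M / P = M % 10 :=
    Nat.div_pow_eq_mod_of_digits_reverse (by norm_num) hM.ne' h
  have hlead : M / P = 2 * M % 10 := by
    have h' : (Nat.digits 10 (2 * M)).reverse = Nat.digits 10 M := by
      rw [← h, List.reverse_reverse]
    rw [← Nat.div_pow_eq_mod_of_digits_reverse (by norm_num) (by omega) h', hlen]
  have hlead_two_mul_ne_zero : 2 * M / P ≠ 0 :=
    Nat.div_pow_length_digits_sub_one_ne_zero (by norm_num) (by omega)
  have hlow := Nat.mul_div_le_mul_div_assoc 2 M P
  have hhigh := Nat.mul_div_lt_mul_div_add 2 M (P := P) (by norm_num) (by positivity)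
  have hdigit : M % 10 < 10 := Nat.mod_lt M (by norm_num)
  interval_cases ha : M % 10 <;> omega
end

section
/- There is no positive (10,3)-reverse multiple; that is, there is no positive integer M such that the reversal of the decimal digit expansion of M equals the decimal digit expansion of 3·M. -/
/-!
Reversal swaps the units digit and the leading digit, so if `M` has leading digit `a` and units
digit `b`, then `3M` has leading digit `b` and units digit `a`. Since `3M` has as many digits as
`M`, the leading digit `b` of `3M` lies in `[3a, 3a + 2]`, forcing `a ≤ 3`, while `3b ≡ a (mod 10)`.
None of the pairs `(1, 3..5)`, `(2, 6..8)`, `(3, 9)` satisfies this congruence.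
-/

theorem Nat.getLast!_digits {b : ℕ} (hb : 2 ≤ b) (n : ℕ) :
    (b.digits n).getLast! = n / b ^ ((b.digits n).length - 1) := by
  rw [Nat.self_div_pow_eq_ofDigits_drop _ _ hb]
  rcases eq_or_ne n 0 with rfl | hn
  · simp
  · rw [List.drop_length_sub_one (Nat.digits_ne_nil_iff_ne_zero.mpr hn), Nat.ofDigits_singleton,
      List.getLast!_eq_getLast?_getD, List.getLast?_eq_some_getLast, Option.getD_some]

theorem Nat.mod_eq_div_of_digits_reverse {b M N : ℕ} (hb : 2 ≤ b)
    (h : (b.digits M).reverse = b.digits N) : N % b = M / b ^ ((b.digits M).length - 1) := by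
  rw [← Nat.head!_digits (by omega), ← h, ← Nat.getLast!_digits hb, List.head!_eq_head?_getD,
    List.head?_reverse, List.getLast!_eq_getLast?_getD]

theorem Nat.base_pow_length_sub_one_digits_le {b : ℕ} (hb : 1 < b) {m : ℕ} (hm : m ≠ 0) :
    b ^ ((b.digits m).length - 1) ≤ m := by
  have hlen : 0 < (b.digits m).length :=
    List.length_pos_iff.mpr (Nat.digits_ne_nil_iff_ne_zero.mpr hm)
  have h := Nat.base_pow_length_digits_le b m hb hm
  rw [← Nat.sub_one_add_one hlen.ne', pow_succ'] at h
  exact Nat.le_of_mul_le_mul_left h (by omega)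

theorem Nat.mul_div_lt_mul_div_add_s7 {k P : ℕ} (hk : 0 < k) (hP : 0 < P) (M : ℕ) :
    k * M / P < k * (M / P) + k := by
  rw [Nat.div_lt_iff_lt_mul hP, ← Nat.mul_add_one, mul_assoc]
  exact Nat.mul_lt_mul_of_pos_left (mul_comm P _ ▸ Nat.lt_mul_div_succ M hP) hk

/-- There is no positive `(10, 3)`-reverse multiple. -/
theorem stmt_7 :
    ¬ ∃ M : ℕ, 0 < M ∧ (Nat.digits 10 M).reverse = Nat.digits 10 (3 * M) := by
  rintro ⟨M, hM, hrev⟩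
  have hlen : (Nat.digits 10 (3 * M)).length = (Nat.digits 10 M).length := by
    rw [← hrev, List.length_reverse]
  set P := 10 ^ ((Nat.digits 10 M).length - 1)
  have hP : 0 < P := by positivity
  have hunits : 3 * M % 10 = M / P := Nat.mod_eq_div_of_digits_reverse (by norm_num) hrev
  have hleading : M % 10 = 3 * M / P := by
    simpa only [hlen] using Nat.mod_eq_div_of_digits_reverse (b := 10) (M := 3 * M) (N := M)
      (by norm_num) (by rw [← hrev, List.reverse_reverse])
  have hleading_pos : 0 < M / P :=
    Nat.div_pos (Nat.base_pow_length_sub_one_digits_le (by norm_num) hM.ne') hP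
  have hlow := Nat.mul_div_le_mul_div_assoc 3 M P
  have hhigh := Nat.mul_div_lt_mul_div_add_s7 (k := 3) (by norm_num) hP M
  have : M / P ≤ 3 := by omega
  interval_cases M / P <;> omega
end

section
/- There is no positive (10,5)-reverse multiple; that is, there is no positive integer M such that the reversal of the decimal digit expansion of M equals the decimal digit expansion of 5·M. -/
/-- There is no positive `(10, 5)`-reverse multiple. -/
theorem stmt_8 :
    ¬ ∃ M : ℕ, 0 < M ∧ (Nat.digits 10 M).reverse = Nat.digits 10 (5 * M) := by
  rintro ⟨M, hM, h⟩
  set L := Nat.digits 10 M with hL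
  have hMne : M ≠ 0 := by omega
  have h5 : 5 * M ≠ 0 := by omega
  have hLne : L ≠ [] := Nat.digits_ne_nil_iff_ne_zero.mpr hMne
  have hlen : L.length = (Nat.digits 10 (5 * M)).length := by
    rw [← h, List.length_reverse]
  have hdig : Nat.digits 10 (5 * M) = (5 * M) % 10 :: Nat.digits 10 ((5 * M) / 10) :=
    Nat.digits_def' (by norm_num) (by omega)
  have hrev : L.reverse = L.getLast hLne :: L.dropLast.reverse := by
    conv_lhs => rw [← List.dropLast_append_getLast hLne]
    simp
  have hlast : L.getLast hLne = (5 * M) % 10 := by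
    rw [hrev, hdig] at h
    exact (List.cons.injEq _ _ _ _ ▸ h).1
  have hne0 : L.getLast hLne ≠ 0 := Nat.getLast_digit_ne_zero 10 hMne
  have hd5 : L.getLast hLne = 5 := by
    have : (5 * M) % 10 = 0 ∨ (5 * M) % 10 = 5 := by omega
    omega
  -- lower bound on M
  have hsplit : L = L.dropLast ++ [5] := by
    conv_lhs => rw [← List.dropLast_append_getLast hLne, hd5]
  have hM_eq : M = Nat.ofDigits 10 L := (Nat.ofDigits_digits 10 M).symm
  have hMlb : 5 * 10 ^ (L.length - 1) ≤ M := by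
    rw [hM_eq]
    conv_rhs => rw [hsplit]
    rw [Nat.ofDigits_append]
    have hlen' : L.dropLast.length = L.length - 1 := by
      simp [List.length_dropLast]
    rw [hlen']
    simp [Nat.ofDigits]
    omega
  -- upper bound on 5M
  have hub : 5 * M < 10 ^ L.length := by
    rw [hlen]
    exact Nat.lt_base_pow_length_digits (by norm_num)
  have hn1 : 1 ≤ L.length := List.length_pos_iff.mpr hLne
  have : 10 ^ L.length = 10 * 10 ^ (L.length - 1) := by
    rw [← pow_succ']
    congr 1
    omega
  omega
end

section
/- There is no positive (10,6)-reverse multiple; that is, there is no positive integer M such that the reversal of the decimal digit expansion of M equals the decimal digit expansion of 6·M. -/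
/-!
If the digits of `M` reversed are those of `k * M`, then the leading digit `d` of `M` is the
units digit of `k * M`, and `k * M` has as many digits as `M`, which forces `k * d < 10`.
For `k = 6` the units digit of `6 * M` is even, so `d ≥ 2` and `6 * d ≥ 12`.
-/

namespace Nat

theorem getLast_digits_mul_pow_le (b m : ℕ) (h : digits b m ≠ []) :
    (digits b m).getLast h * b ^ ((digits b m).length - 1) ≤ m := by
  conv_rhs => rw [← ofDigits_digits b m, ← List.dropLast_append_getLast h]
  rw [ofDigits_append, ofDigits_singleton, List.length_dropLast, mul_comm]
  exact le_add_self

theorem getLast_digits_eq_mod_of_reverse_eq {b m n : ℕ} (hb : b ≠ 1) (hm : digits b m ≠ [])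
    (h : (digits b m).reverse = digits b n) : (digits b m).getLast hm = n % b := by
  rw [← head!_digits hb, ← h, List.getLast_eq_head_reverse, List.head!_eq_head?_getD,
    List.head?_eq_some_head, Option.getD_some]

theorem mul_getLast_digits_lt_of_reverse_eq {b k m : ℕ} (hb : 1 < b) (hm : digits b m ≠ [])
    (h : (digits b m).reverse = digits b (k * m)) : k * (digits b m).getLast hm < b := by
  set n := (digits b m).length
  have hkm : k * m < b ^ n := by
    simpa only [← h, List.length_reverse] using lt_base_pow_length_digits (m := k * m) hb
  have hn1 : b ^ n = b * b ^ (n - 1) := by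
    have hn0 : 0 < n := List.length_pos_iff.mpr hm
    rw [← _root_.pow_succ', Nat.sub_one_add_one hn0.ne']
  refine Nat.lt_of_mul_lt_mul_right (a := b ^ (n - 1)) ?_
  calc k * (digits b m).getLast hm * b ^ (n - 1)
      ≤ k * m := by rw [mul_assoc]; exact Nat.mul_le_mul_left k (getLast_digits_mul_pow_le b m hm)
    _ < b * b ^ (n - 1) := hn1 ▸ hkm

end Nat

/-- There is no positive `(10, 6)`-reverse multiple. -/
theorem stmt_9 :
    ¬ ∃ M : ℕ, 0 < M ∧ (Nat.digits 10 M).reverse = Nat.digits 10 (6 * M) := by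
  rintro ⟨M, hM, h⟩
  have hdigits : Nat.digits 10 M ≠ [] := Nat.digits_ne_nil_iff_ne_zero.mpr hM.ne'
  have hlead_ne : (Nat.digits 10 M).getLast hdigits ≠ 0 := Nat.getLast_digit_ne_zero 10 hM.ne'
  have hlead_eq := Nat.getLast_digits_eq_mod_of_reverse_eq (by norm_num) hdigits h
  have hlead_lt := Nat.mul_getLast_digits_lt_of_reverse_eq (by norm_num) hdigits h
  omega
end

section
/- There is no positive (10,7)-reverse multiple; that is, there is no positive integer M such that the reversal of the decimal digit expansion of M equals the decimal digit expansion of 7·M. -/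
/-!
Read the reversal at both ends: the last digit of `7 * M` is the leading digit of `M`, the last
digit of `M` is the leading digit of `7 * M`, and `M`, `7 * M` have equally many digits. Hence `M`
has leading digit 1, so `7 * M` ends in 1 and `M` ends in 3; yet `7 * M` has leading digit at
least 7.
-/

namespace Nat

theorem getLast?_digits {b m : ℕ} (hb : 1 < b) (hm : m ≠ 0) :
    (b.digits m).getLast? = some (m / b ^ b.log m) := by
  rw [List.getLast?_eq_some_getLast (digits_ne_nil_iff_ne_zero.mpr hm),
    self_div_pow_eq_ofDigits_drop _ _ hb, ← Nat.add_sub_cancel (n := b.log m) (m := 1),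
    ← length_digits b m hb hm, List.drop_length_sub_one, ofDigits_singleton]

theorem head?_digits {b m : ℕ} (hb : 1 < b) (hm : m ≠ 0) :
    (b.digits m).head? = some (m % b) := by
  rw [digits_def' hb (pos_of_ne_zero hm), List.head?_cons]

section ReverseMultiple

variable {b k M : ℕ}

theorem mul_ne_zero_of_digits_reverse (hM : M ≠ 0)
    (h : (b.digits M).reverse = b.digits (k * M)) : k * M ≠ 0 := by
  intro h0
  rw [h0, digits_zero, List.reverse_eq_nil_iff, digits_eq_nil_iff_eq_zero] at h
  exact hM h

theorem log_mul_eq_log_of_digits_reverse (hb : 1 < b) (hM : M ≠ 0)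
    (h : (b.digits M).reverse = b.digits (k * M)) : b.log (k * M) = b.log M := by
  have hlen := congrArg List.length h
  rw [List.length_reverse, length_digits b M hb hM,
    length_digits b _ hb (mul_ne_zero_of_digits_reverse hM h)] at hlen
  omega

theorem mul_mod_eq_div_of_digits_reverse (hb : 1 < b) (hM : M ≠ 0)
    (h : (b.digits M).reverse = b.digits (k * M)) : k * M % b = M / b ^ b.log M := by
  have hhead := congrArg List.head? h
  rw [List.head?_reverse, getLast?_digits hb hM,
    head?_digits hb (mul_ne_zero_of_digits_reverse hM h)] at hhead
  exact (Option.some.inj hhead).symm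

theorem mod_eq_mul_div_of_digits_reverse (hb : 1 < b) (hM : M ≠ 0)
    (h : (b.digits M).reverse = b.digits (k * M)) : M % b = k * M / b ^ b.log M := by
  have hlast := congrArg List.getLast? h
  rw [List.getLast?_reverse, head?_digits hb hM,
    getLast?_digits hb (mul_ne_zero_of_digits_reverse hM h),
    log_mul_eq_log_of_digits_reverse hb hM h] at hlast
  exact Option.some.inj hlast

end ReverseMultiple

end Nat

/-- There is no positive `(10, 7)`-reverse multiple. -/
theorem stmt_10 :
    ¬ ∃ M : ℕ, 0 < M ∧ (Nat.digits 10 M).reverse = Nat.digits 10 (7 * M) := by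
  rintro ⟨M, hM, h⟩
  have hb : 1 < 10 := by norm_num
  have hlog := Nat.log_mul_eq_log_of_digits_reverse hb hM.ne' h
  have hlast_7M := Nat.mul_mod_eq_div_of_digits_reverse hb hM.ne' h
  have hlast_M := Nat.mod_eq_mul_div_of_digits_reverse hb hM.ne' h
  set P := 10 ^ Nat.log 10 M
  have hP_le : P ≤ M := Nat.pow_log_le_self 10 hM.ne'
  have h7M_lt : 7 * M < 10 * P := by
    rw [← pow_succ', ← hlog]
    exact Nat.lt_pow_succ_log_self hb _
  have hlead_M : M / P = 1 := Nat.div_eq_of_lt_le (by omega) (by omega)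
  have hlead_7M : 7 ≤ 7 * M / P := (Nat.le_div_iff_mul_le (by omega)).2 (by omega)
  omega
end

section
/- Every positive (10,4)-reverse multiple M satisfies M ≡ 78 (mod 100), and its big-endian decimal expansion begins with the digits 2, 1; that is, the two most significant decimal digits of M are 2 and 1 and the two least significant digits are 7 and 8. -/
/-!
Let `k + 2` be the number of digits of `M`. Reversal exchanges the leading and trailing pairs of
digits, so `A = M / 10 ^ k` and `B = 4 * M / 10 ^ k` are the last two digits of `4 * M` and of `M`
read backwards. Since `4 * M` has as many digits as `M`, we have `10 ≤ A` and
`4 * A ≤ B ≤ 4 * A + 3`; both `A` and `B` depend only on `M % 100`, and among the hundred residues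
only `78` satisfies these constraints.
-/

namespace Nat

theorem eq_of_digits_reverse_of_length_lt_two {b m n : ℕ}
    (hrev : (b.digits m).reverse = b.digits n) (hlen : (b.digits m).length < 2) : m = n := by
  refine (Nat.digits_inj_iff (b := b)).mp ?_
  rw [← hrev]
  match b.digits m, hlen with
  | [], _ => rfl
  | [_], _ => rfl

theorem div_pow_length_sub_two_of_digits_reverse {b m n : ℕ} (hb : 1 < b)
    (hrev : (b.digits m).reverse = b.digits n) (hlen : 2 ≤ (b.digits m).length) :
    m / b ^ ((b.digits m).length - 2) = b * (n % b) + n / b % b := by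
  have hlen' : (b.digits n).length = (b.digits m).length := by rw [← hrev, List.length_reverse]
  have hn : 0 < n := Nat.pos_of_ne_zero fun h => by simp [h] at hlen'; omega
  have hdigits := Nat.digits_def' hb hn
  have hnb : 0 < n / b := Nat.pos_of_ne_zero fun h => by simp [hdigits, h] at hlen'; omega
  rw [Nat.digits_def' hb hnb] at hdigits
  have hm : b.digits m = (b.digits (n / b / b)).reverse ++ [n / b % b, n % b] := by
    rw [← List.reverse_reverse (b.digits m), hrev, hdigits]
    simp
  rw [Nat.self_div_pow_eq_ofDigits_drop _ _ hb, hm, List.drop_left' (by simp)]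
  simp [Nat.ofDigits]
  ring

theorem le_div_pow_length_sub_two {b m : ℕ} (hb : 1 < b) (hm : m ≠ 0)
    (hlen : 2 ≤ (b.digits m).length) : b ≤ m / b ^ ((b.digits m).length - 2) := by
  have h := Nat.base_pow_length_digits_le b m hb hm
  rw [show (b.digits m).length = (b.digits m).length - 2 + 1 + 1 by omega, pow_succ] at h
  rw [Nat.le_div_iff_mul_le (by positivity), ← pow_succ']
  exact Nat.le_of_mul_le_mul_right (by rwa [mul_comm b m] at h) (by omega)

theorem mul_div_lt_mul_div_add_s14 {c d : ℕ} (m : ℕ) (hc : 0 < c) (hd : 0 < d) :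
    c * m / d < c * (m / d) + c := by
  rw [Nat.div_lt_iff_lt_mul hd]
  have := Nat.div_add_mod m d
  have := Nat.mod_lt m hd
  nlinarith

end Nat

def revLastTwoDigits (n : ℕ) : ℕ := 10 * (n % 10) + n / 10 % 10

theorem revLastTwoDigits_mod_hundred (n : ℕ) : revLastTwoDigits (n % 100) = revLastTwoDigits n := by
  unfold revLastTwoDigits
  omega

theorem eq_78_of_revLastTwoDigits_bounds : ∀ c < 100,
    10 ≤ revLastTwoDigits (4 * c % 100) →
    4 * revLastTwoDigits (4 * c % 100) ≤ revLastTwoDigits c →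
    revLastTwoDigits c < 4 * revLastTwoDigits (4 * c % 100) + 4 → c = 78 := by
  decide

/-- Every positive `(10, 4)`-reverse multiple `M` satisfies `M ≡ 78 [MOD 100]`, and its
big-endian decimal expansion begins with the digits `2, 1`. -/
theorem stmt_14 (M : ℕ) (hM : 0 < M)
    (hrev : (Nat.digits 10 M).reverse = Nat.digits 10 (4 * M)) :
    M % 100 = 78 ∧ ((Nat.digits 10 M).reverse).take 2 = [2, 1] := by
  have hlen : 2 ≤ (Nat.digits 10 M).length := by
    by_contra! h
    have := Nat.eq_of_digits_reverse_of_length_lt_two hrev h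
    omega
  have hrev' : (Nat.digits 10 (4 * M)).reverse = Nat.digits 10 M := by
    rw [← hrev, List.reverse_reverse]
  have hlen' : (Nat.digits 10 (4 * M)).length = (Nat.digits 10 M).length := by
    rw [← hrev, List.length_reverse]
  set k := (Nat.digits 10 M).length - 2
  have htopM : M / 10 ^ k = revLastTwoDigits (4 * M) :=
    Nat.div_pow_length_sub_two_of_digits_reverse (by norm_num) hrev hlen
  have htop4M : 4 * M / 10 ^ k = revLastTwoDigits M := by
    have h := Nat.div_pow_length_sub_two_of_digits_reverse (by norm_num) hrev' (hlen' ▸ hlen)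
    rwa [hlen'] at h
  have h4M : 4 * M % 100 = 4 * (M % 100) % 100 := by omega
  rw [← revLastTwoDigits_mod_hundred, h4M] at htopM
  rw [← revLastTwoDigits_mod_hundred] at htop4M
  have hlow := Nat.le_div_pow_length_sub_two (by norm_num) hM.ne' hlen
  have hge := Nat.mul_div_le_mul_div_assoc 4 M (10 ^ k)
  have hlt := Nat.mul_div_lt_mul_div_add_s14 M (c := 4) (by norm_num) (by positivity : 0 < 10 ^ k)
  rw [htopM] at hlow hge hlt
  rw [htop4M] at hge hlt
  have hM78 :=
    eq_78_of_revLastTwoDigits_bounds (M % 100) (Nat.mod_lt _ (by norm_num)) hlow hge hlt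
  refine ⟨hM78, ?_⟩
  rw [hrev, Nat.digits_def' (by norm_num) (by omega), Nat.digits_def' (by norm_num) (by omega)]
  simp only [List.take_succ_cons, List.take_zero, List.cons.injEq, and_true]
  omega
end

section
/- Every positive (10,9)-reverse multiple M satisfies M ≡ 89 (mod 100), and its big-endian decimal expansion begins with the digits 1, 0; that is, the two most significant decimal digits of M are 1 and 0 and the two least significant digits are 8 and 9. -/
/-!
If `M` has `n` digits, so does `9 * M`, hence `10 ^ (n - 1) ≤ M < 10 ^ n / 9`: `M` begins with
`1` and then `0` or `1`. Reversal matches the digits of `9 * M` at positions `0, 1, n - 2` with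
those of `M` at positions `n - 1, n - 2, 1`. The first match gives `M ≡ 9 [MOD 10]`; a second
digit `1` would make `9 * M` begin with `9, 9`, hence `M ≡ 99` and `9 * M ≡ 91 [MOD 100]`,
contradicting the second match; so the second digit is `0`, and the tens digit of `9 * M`
being `0` forces `M ≡ 89 [MOD 100]`.
-/

namespace Nat

variable {b k M : ℕ}

theorem digit_mul_eq_digit_of_reverse_digits (hb : 2 ≤ b)
    (hrev : (digits b M).reverse = digits b (k * M)) {i j : ℕ}
    (hij : i + j + 1 = (digits b M).length) :
    k * M / b ^ i % b = M / b ^ j % b := by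
  have hi : i < (digits b M).reverse.length := by rw [List.length_reverse]; omega
  rw [← getD_digits _ _ hb, ← hrev, List.getD_eq_getElem _ _ hi, List.getElem_reverse,
    ← List.getD_eq_getElem _ 0, getD_digits _ _ hb, show (digits b M).length - 1 - i = j by omega]

theorem mul_lt_base_pow_length_of_reverse_digits (hb : 1 < b)
    (hrev : (digits b M).reverse = digits b (k * M)) :
    k * M < b ^ (digits b M).length := by
  rw [← List.length_reverse, hrev]
  exact lt_base_pow_length_digits hb

end Nat

open Nat

-- `Q = 10 ^ (n - 2)` for an `n`-digit `M`; `h0`, `h1`, `h2` are the three digit matches.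
theorem mod_hundred_eq_89_of_digit_eqs {M Q : ℕ} (hQ : 0 < Q) (hlo : 10 * Q ≤ M)
    (hhi : 9 * M < 100 * Q) (h0 : 9 * M % 10 = M / (10 * Q) % 10)
    (h1 : 9 * M / 10 % 10 = M / Q % 10) (h2 : 9 * M / Q % 10 = M / 10 % 10) :
    M % 100 = 89 := by
  have hlead : M / (10 * Q) = 1 := Nat.div_eq_of_lt_le (by omega) (by omega)
  have hq : M / Q = 10 ∨ M / Q = 11 := by
    have h10 : 10 ≤ M / Q := (Nat.le_div_iff_mul_le hQ).mpr (by omega)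
    have h12 : M / Q < 12 := (Nat.div_lt_iff_lt_mul hQ).mpr (by omega)
    omega
  rcases hq with hq | hq
  · omega
  · have h99 : 9 * M / Q = 99 := by
      have := Nat.div_mul_le_self M Q
      rw [hq] at this
      exact Nat.div_eq_of_lt_le (by omega) (by omega)
    omega

/-- Every positive `(10, 9)`-reverse multiple `M` satisfies `M ≡ 89 [MOD 100]`, and its
big-endian decimal expansion begins with the digits `1, 0`. -/
theorem stmt_15 (M : ℕ) (hM : 0 < M)
    (hrev : (Nat.digits 10 M).reverse = Nat.digits 10 (9 * M)) :
    M % 100 = 89 ∧ ((Nat.digits 10 M).reverse).take 2 = [1, 0] := by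
  have h10 : 10 ≤ M := by
    by_contra! h
    interval_cases M <;> simp at hrev
  obtain ⟨m, hm⟩ : ∃ m, (digits 10 M).length = m + 2 :=
    ⟨_, (Nat.sub_add_cancel (le_length_digits_le 10 10 M h10)).symm⟩
  have hlo := base_pow_length_digits_le 10 M (by norm_num) hM.ne'
  have hhi := mul_lt_base_pow_length_of_reverse_digits (by norm_num) hrev
  rw [hm, pow_add] at hlo hhi
  have digit_eq := fun i j (hij : i + j + 1 = m + 2) ↦
    digit_mul_eq_digit_of_reverse_digits (by norm_num) hrev (hij.trans hm.symm)
  have h89 : M % 100 = 89 := by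
    refine mod_hundred_eq_89_of_digit_eqs (Q := 10 ^ m) (by positivity) (by omega) (by omega)
      ?_ ?_ ?_
    · simpa [pow_succ, mul_comm] using digit_eq 0 (m + 1) (by omega)
    · simpa using digit_eq 1 m (by omega)
    · simpa using digit_eq m 1 (by omega)
  refine ⟨h89, ?_⟩
  rw [hrev, digits_def' (by norm_num) (by omega), digits_def' (by norm_num) (by omega)]
  simp only [List.take_succ_cons, List.take_zero, List.cons.injEq, and_true]
  omega
end

section
/- Let M be a positive (10,4)-reverse multiple. Then there exist an integer i ≥ 1 and nonnegative integers l_1, …, l_i and m_1, …, m_i such that, writing C_j for the digit block '21' followed by l_j nines followed by '78' and Z_j for a block of m_j zeros, the big-endian decimal digit string of M is either the palindromic concatenation C_1 Z_1 C_2 Z_2 … C_{i-1} Z_{i-1} C_i Z_i C_i Z_{i-1} C_{i-1} … Z_1 C_1 (with 2i blocks C and central zero block Z_i) or the palindromic concatenation C_1 Z_1 … C_{i-1} Z_{i-1} C_i Z_{i-1} C_{i-1} … Z_1 C_1 (with 2i−1 blocks C and central block C_i). -/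
/-!
Read the digits of `M` from both ends at once. After stripping `n` digits from each end, what
remains of the identity `4 * M = reverse M` is an identity `4 * x + u = reverse x + v * 10 ^ len`
for the middle part `x`, with carries `u` into its low end and `v` out of its high end. Only the
carry pairs `(0,0)`, `(3,0)`, `(3,3)`, `(0,3)` occur, and in each one the outer digits are forced:
reading `M` big-endian, `(0,0)` allows `0…0` (staying) or `2…8` (to `(3,0)`), `(3,0)` forces
`1…7` (to `(3,3)`), `(3,3)` allows `9…9` (staying) or `7…1` (to `(0,3)`), and `(0,3)` forces
`8…2` (back to `(0,0)`). The strings this automaton accepts from `(0,0)` are therefore the nested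
palindromes `0^k 21 9^j 78 … 21 9^j 78 0^k`, and a leading digit `≠ 0` removes the outer zeros.
-/

/-- `L` is the little-endian digit string of the middle part of a `(b, k)`-reverse multiple,
with carry `u` into its low end and carry `v` out of its high end. -/
def CarryReverse (b k u v : ℕ) (L : List ℕ) : Prop :=
  k * Nat.ofDigits b L + u = Nat.ofDigits b L.reverse + v * b ^ L.length

theorem carryReverse_digits_of_reverse_eq {b k M : ℕ}
    (h : (Nat.digits b M).reverse = Nat.digits b (k * M)) :
    CarryReverse b k 0 0 (Nat.digits b M) := by
  simp only [CarryReverse, h, Nat.ofDigits_digits, add_zero, zero_mul]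

theorem carryReverse_cons_append_iff {b k u v a c : ℕ} {mid : List ℕ} :
    CarryReverse b k u v (a :: (mid ++ [c])) ↔
      k * (a + b * (Nat.ofDigits b mid + b ^ mid.length * c)) + u =
        c + b * (Nat.ofDigits b mid.reverse + b ^ mid.length * a) +
          v * (b * b * b ^ mid.length) := by
  simp only [CarryReverse, List.reverse_cons, List.reverse_append, Nat.ofDigits_cons,
    Nat.ofDigits_append, Nat.ofDigits_nil, List.reverse_nil, List.length_cons,
    List.length_append, List.length_reverse, List.length_nil]
  ring_nf

/-- Abstracts the middle to atoms `X`, `Y`, `P = b ^ mid.length` on which `omega` can argue. -/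
theorem CarryReverse.exists_of_cons_append {b k u v a c : ℕ} {mid : List ℕ} (hb : 1 < b)
    (hmid : ∀ d ∈ mid, d < b) (h : CarryReverse b k u v (a :: (mid ++ [c]))) :
    ∃ X Y P : ℕ, X < P ∧ Y < P ∧
      k * (a + b * (X + P * c)) + u = c + b * (Y + P * a) + v * (b * b * P) ∧
      ∀ u' v', CarryReverse b k u' v' mid ↔ k * X + u' = Y + v' * P := by
  refine ⟨_, _, _, Nat.ofDigits_lt_base_pow_length hb hmid, ?_,
    carryReverse_cons_append_iff.mp h, fun _ _ => Iff.rfl⟩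
  simpa using Nat.ofDigits_lt_base_pow_length hb (l := mid.reverse) (by simpa using hmid)

theorem carryReverse_singleton_iff {b k u v a : ℕ} :
    CarryReverse b k u v [a] ↔ k * a + u = a + v * b := by
  simp [CarryReverse]

section Transitions

variable {a c : ℕ} {mid : List ℕ}

theorem CarryReverse.peel_zero_zero (ha : a < 10) (hc : c < 10) (hmid : ∀ d ∈ mid, d < 10)
    (h : CarryReverse 10 4 0 0 (a :: (mid ++ [c]))) :
    a = 0 ∧ c = 0 ∧ CarryReverse 10 4 0 0 mid ∨
      a = 8 ∧ c = 2 ∧ CarryReverse 10 4 3 0 mid := by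
  obtain ⟨X, Y, P, hX, hY, h, hmid⟩ := h.exists_of_cons_append (by norm_num) hmid
  simp only [hmid]
  interval_cases a <;> interval_cases c <;> omega

theorem CarryReverse.peel_three_zero (ha : a < 10) (hc : c < 10) (hmid : ∀ d ∈ mid, d < 10)
    (h : CarryReverse 10 4 3 0 (a :: (mid ++ [c]))) :
    a = 7 ∧ c = 1 ∧ CarryReverse 10 4 3 3 mid := by
  obtain ⟨X, Y, P, hX, hY, h, hmid⟩ := h.exists_of_cons_append (by norm_num) hmid
  simp only [hmid]
  interval_cases a <;> interval_cases c <;> omega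

theorem CarryReverse.peel_three_three (ha : a < 10) (hc : c < 10) (hmid : ∀ d ∈ mid, d < 10)
    (h : CarryReverse 10 4 3 3 (a :: (mid ++ [c]))) :
    a = 9 ∧ c = 9 ∧ CarryReverse 10 4 3 3 mid ∨
      a = 1 ∧ c = 7 ∧ CarryReverse 10 4 0 3 mid := by
  obtain ⟨X, Y, P, hX, hY, h, hmid⟩ := h.exists_of_cons_append (by norm_num) hmid
  simp only [hmid]
  interval_cases a <;> interval_cases c <;> omega

theorem CarryReverse.peel_zero_three (ha : a < 10) (hc : c < 10) (hmid : ∀ d ∈ mid, d < 10)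
    (h : CarryReverse 10 4 0 3 (a :: (mid ++ [c]))) :
    a = 2 ∧ c = 8 ∧ CarryReverse 10 4 0 0 mid := by
  obtain ⟨X, Y, P, hX, hY, h, hmid⟩ := h.exists_of_cons_append (by norm_num) hmid
  simp only [hmid]
  interval_cases a <;> interval_cases c <;> omega

end Transitions

theorem evenString4_succ {i : ℕ} (hi : 1 ≤ i) (l m : ℕ → ℕ) (a b : ℕ) :
    evenString4 (i + 1) (fun t => if t = 1 then a else l (t - 1))
        (fun t => if t = 1 then b else m (t - 1)) =
      cBlock4 a ++ zBlock b ++ evenString4 i l m ++ zBlock b ++ cBlock4 a := by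
  obtain ⟨i, rfl⟩ := Nat.exists_eq_add_of_le' hi
  simp only [evenString4, Nat.add_sub_cancel, List.range_succ_eq_map]
  simp [Function.comp_def]

theorem oddString4_succ {i : ℕ} (hi : 1 ≤ i) (l m : ℕ → ℕ) (a b : ℕ) :
    oddString4 (i + 1) (fun t => if t = 1 then a else l (t - 1))
        (fun t => if t = 1 then b else m (t - 1)) =
      cBlock4 a ++ zBlock b ++ oddString4 i l m ++ zBlock b ++ cBlock4 a := by
  obtain ⟨i, rfl⟩ := Nat.exists_eq_add_of_le' hi
  simp only [oddString4, Nat.add_sub_cancel, List.range_succ_eq_map]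
  simp [Function.comp_def]

theorem List.cons_replicate_append_replicate_append_singleton {α : Type*} (x : α) (k : ℕ)
    (s : List α) :
    x :: (replicate k x ++ s ++ replicate k x ++ [x]) =
      replicate (k + 1) x ++ s ++ replicate (k + 1) x := by
  nth_rw 2 [List.replicate_succ']
  simp [List.replicate_succ]

def IsBlockString4 (s : List ℕ) : Prop :=
  ∃ i : ℕ, 1 ≤ i ∧ ∃ l m : ℕ → ℕ, s = evenString4 i l m ∨ s = oddString4 i l m

/-- The big-endian digit strings accepted from the carry state `(0,0)`. -/
def IsZeroPadded (s : List ℕ) : Prop :=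
  (∃ k, s = zBlock k) ∨ ∃ k g, IsBlockString4 g ∧ s = zBlock k ++ g ++ zBlock k

/-- The big-endian digit strings accepted from the carry state `(3,3)`. -/
def IsNinePadded (s : List ℕ) : Prop :=
  (∃ j, s = List.replicate j 9) ∨
    ∃ j c, IsZeroPadded c ∧
      s = List.replicate j 9 ++ ([7, 8] ++ c ++ [2, 1]) ++ List.replicate j 9

theorem isBlockString4_cBlock4 (a : ℕ) : IsBlockString4 (cBlock4 a) :=
  ⟨1, le_rfl, fun _ => a, fun _ => 0, .inr (by simp [oddString4])⟩

theorem isBlockString4_cBlock4_append_zBlock_append (a b : ℕ) :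
    IsBlockString4 (cBlock4 a ++ zBlock b ++ cBlock4 a) :=
  ⟨1, le_rfl, fun _ => a, fun _ => b, .inl (by simp [evenString4])⟩

theorem IsBlockString4.wrap {g : List ℕ} (hg : IsBlockString4 g) (a b : ℕ) :
    IsBlockString4 (cBlock4 a ++ zBlock b ++ g ++ zBlock b ++ cBlock4 a) := by
  obtain ⟨i, hi, l, m, rfl | rfl⟩ := hg
  · exact ⟨i + 1, by omega, _, _, .inl (evenString4_succ hi l m a b).symm⟩
  · exact ⟨i + 1, by omega, _, _, .inr (oddString4_succ hi l m a b).symm⟩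

theorem IsBlockString4.isZeroPadded {g : List ℕ} (hg : IsBlockString4 g) : IsZeroPadded g :=
  .inr ⟨0, g, hg, by simp [zBlock]⟩

theorem IsNinePadded.isBlockString4 {s : List ℕ} (hs : IsNinePadded s) :
    IsBlockString4 ([2, 1] ++ s ++ [7, 8]) := by
  rcases hs with ⟨j, rfl⟩ | ⟨j, c, hc, rfl⟩
  · simpa [cBlock4] using isBlockString4_cBlock4 j
  · have hblocks : [2, 1] ++ (List.replicate j 9 ++ ([7, 8] ++ c ++ [2, 1]) ++
        List.replicate j 9) ++ [7, 8] = cBlock4 j ++ c ++ cBlock4 j := by simp [cBlock4]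
    rw [hblocks]
    rcases hc with ⟨k, rfl⟩ | ⟨k, g, hg, rfl⟩
    · exact isBlockString4_cBlock4_append_zBlock_append j k
    · simpa using hg.wrap j k

theorem IsZeroPadded.zero_cons_append {s : List ℕ} (hs : IsZeroPadded s) :
    IsZeroPadded (0 :: (s ++ [0])) := by
  rcases hs with ⟨k, rfl⟩ | ⟨k, g, hg, rfl⟩
  · exact .inl ⟨k + 2, by rw [zBlock, zBlock, List.replicate_succ, ← List.replicate_succ']⟩
  · exact .inr ⟨k + 1, g, hg, List.cons_replicate_append_replicate_append_singleton 0 k g⟩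

theorem IsNinePadded.nine_cons_append {s : List ℕ} (hs : IsNinePadded s) :
    IsNinePadded (9 :: (s ++ [9])) := by
  rcases hs with ⟨j, rfl⟩ | ⟨j, c, hc, rfl⟩
  · exact .inl ⟨j + 2, by rw [List.replicate_succ, ← List.replicate_succ']⟩
  · exact .inr ⟨j + 1, c, hc, List.cons_replicate_append_replicate_append_singleton 9 j _⟩

theorem IsZeroPadded.isBlockString4 {s : List ℕ} (hs : IsZeroPadded s) (hne : s ≠ [])
    (hhead : s.head? ≠ some 0) : IsBlockString4 s := by
  rcases hs with ⟨_ | k, rfl⟩ | ⟨_ | k, g, hg, rfl⟩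
  · exact absurd rfl hne
  · simp [zBlock, List.replicate_succ] at hhead
  · simpa [zBlock] using hg
  · simp [zBlock, List.replicate_succ] at hhead

theorem carryReverse_ten_four_classification (L : List ℕ) (hL : ∀ d ∈ L, d < 10) :
    (CarryReverse 10 4 0 0 L → IsZeroPadded L.reverse) ∧
    (CarryReverse 10 4 3 3 L → IsNinePadded L.reverse) ∧
    (CarryReverse 10 4 3 0 L → ∃ s, IsNinePadded s ∧ L.reverse = 1 :: (s ++ [7])) ∧
    (CarryReverse 10 4 0 3 L → ∃ s, IsZeroPadded s ∧ L.reverse = 8 :: (s ++ [2])) := by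
  induction L using List.bidirectionalRec with
  | nil => exact ⟨fun _ => .inl ⟨0, rfl⟩, fun _ => .inl ⟨0, rfl⟩, by simp [CarryReverse],
      by simp [CarryReverse]⟩
  | singleton a =>
    have ha := hL a (by simp)
    simp only [carryReverse_singleton_iff, List.reverse_singleton]
    exact ⟨fun h => .inl ⟨1, by rw [show a = 0 by omega]; rfl⟩,
      fun h => .inl ⟨1, by rw [show a = 9 by omega]; rfl⟩, by omega, by omega⟩
  | cons_append a mid c ih =>
    have ha : a < 10 := hL a (by simp)
    have hc : c < 10 := hL c (by simp)
    have hmid : ∀ d ∈ mid, d < 10 := fun d hd => hL d (by simp [hd])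
    obtain ⟨ih00, ih33, ih30, ih03⟩ := ih hmid
    have hrev : (a :: (mid ++ [c])).reverse = c :: (mid.reverse ++ [a]) := by simp
    rw [hrev]
    refine ⟨fun h => ?_, fun h => ?_, fun h => ?_, fun h => ?_⟩
    · rcases h.peel_zero_zero ha hc hmid with ⟨rfl, rfl, hm⟩ | ⟨rfl, rfl, hm⟩
      · exact (ih00 hm).zero_cons_append
      · obtain ⟨s, hs, hmid_rev⟩ := ih30 hm
        simpa [hmid_rev] using hs.isBlockString4.isZeroPadded
    · rcases h.peel_three_three ha hc hmid with ⟨rfl, rfl, hm⟩ | ⟨rfl, rfl, hm⟩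
      · exact (ih33 hm).nine_cons_append
      · obtain ⟨s, hs, hmid_rev⟩ := ih03 hm
        exact .inr ⟨0, s, hs, by simp [hmid_rev]⟩
    · obtain ⟨rfl, rfl, hm⟩ := h.peel_three_zero ha hc hmid
      exact ⟨_, ih33 hm, rfl⟩
    · obtain ⟨rfl, rfl, hm⟩ := h.peel_zero_three ha hc hmid
      exact ⟨_, ih00 hm, rfl⟩

/-- Every positive `(10, 4)`-reverse multiple has a big-endian decimal digit string
which is one of the two palindromic block concatenations built from blocks
`C_j = 21 9…9 78` (with `l j` nines) and zero blocks `Z_j` (of `m j` zeros). -/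
theorem stmt_16 (M : ℕ) (hM : 0 < M)
    (hrev : (Nat.digits 10 M).reverse = Nat.digits 10 (4 * M)) :
    ∃ i : ℕ, 1 ≤ i ∧ ∃ l m : ℕ → ℕ,
      (Nat.digits 10 M).reverse = evenString4 i l m ∨
      (Nat.digits 10 M).reverse = oddString4 i l m := by
  have hne : Nat.digits 10 M ≠ [] := Nat.digits_ne_nil_iff_ne_zero.mpr hM.ne'
  have hdigits : ∀ d ∈ Nat.digits 10 M, d < 10 := fun _ hd =>
    Nat.digits_lt_base (by norm_num) hd
  have hhead : (Nat.digits 10 M).reverse.head? ≠ some 0 := by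
    rw [List.head?_reverse, List.getLast?_eq_some_getLast hne, Ne, Option.some_inj]
    exact Nat.getLast_digit_ne_zero 10 hM.ne'
  have hpadded := (carryReverse_ten_four_classification _ hdigits).1
    (carryReverse_digits_of_reverse_eq hrev)
  exact hpadded.isBlockString4 (by simpa using hne) hhead
end

section
/- Let M be a positive (10,9)-reverse multiple. Then there exist an integer i ≥ 1 and nonnegative integers l_1, …, l_i and m_1, …, m_i such that, writing C_j for the digit block '10' followed by l_j nines followed by '89' and Z_j for a block of m_j zeros, the big-endian decimal digit string of M is either the palindromic concatenation C_1 Z_1 C_2 Z_2 … C_{i-1} Z_{i-1} C_i Z_i C_i Z_{i-1} C_{i-1} … Z_1 C_1 (with 2i blocks C and central zero block Z_i) or the palindromic concatenation C_1 Z_1 … C_{i-1} Z_{i-1} C_i Z_{i-1} C_{i-1} … Z_1 C_1 (with 2i−1 blocks C and central block C_i). -/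
/-- The big-endian digit block `10 9…9 89` with `l` nines. -/
def cBlock9 (l : ℕ) : List ℕ := [1, 0] ++ List.replicate l 9 ++ [8, 9]

/-- The big-endian digit string
`C_1 Z_1 … C_{i-1} Z_{i-1} C_i Z_i C_i Z_{i-1} C_{i-1} … Z_1 C_1`
(with `2 * i` blocks `C` and central zero block `Z_i`), where `C_j` is the block
`10 9…9 89` with `l j` nines and `Z_j` is a block of `m j` zeros (indices `1, …, i`). -/
def evenString9 (i : ℕ) (l m : ℕ → ℕ) : List ℕ :=
  ((List.range i).map fun j => cBlock9 (l (j + 1)) ++ zBlock (m (j + 1))).flatten ++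
    cBlock9 (l i) ++
    (((List.range (i - 1)).map fun j =>
        zBlock (m (j + 1)) ++ cBlock9 (l (j + 1))).reverse).flatten

/-- The big-endian digit string
`C_1 Z_1 … C_{i-1} Z_{i-1} C_i Z_{i-1} C_{i-1} … Z_1 C_1`
(with `2 * i - 1` blocks `C` and central block `C_i`). -/
def oddString9 (i : ℕ) (l m : ℕ → ℕ) : List ℕ :=
  ((List.range (i - 1)).map fun j => cBlock9 (l (j + 1)) ++ zBlock (m (j + 1))).flatten ++
    cBlock9 (l i) ++
    (((List.range (i - 1)).map fun j =>
        zBlock (m (j + 1)) ++ cBlock9 (l (j + 1))).reverse).flatten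

/-!
Compare `9 * M` with the reversal of `M` digit by digit from both ends at once. What is passed
inward is a pair of carries `(a, b)`: the carry into the lowest remaining digit of `9 * M` and the
carry out of its highest remaining one. Since the middle part is a number below `10 ^ n`, both
carries stay in `[0, 8]`, and then the outer digit pair `(leading, trailing)` is forced:
`(0,0) ⟶ (0,0)` by `(0,0)`, `(0,0) ⟶ (8,0)` by `(1,9)`, `(8,0) ⟶ (8,8)` by `(0,8)`,
`(8,8) ⟶ (8,8)` by `(9,9)`, `(8,8) ⟶ (0,8)` by `(8,0)`, `(0,8) ⟶ (0,0)` by `(9,1)`.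
A round trip from `(0,0)` peels a block `10 9…9 89` off both ends, the loop at `(0,0)` peels equal
runs of zeros, and the string can only end at `(0,0)` with zeros in the middle or at `(8,8)` with
nines in the middle, which then complete a central block.
-/

open List

theorem List.eq_nil_or_eq_singleton_or_eq_cons_concat {α : Type*} (l : List α) :
    l = [] ∨ (∃ d, l = [d]) ∨ ∃ x v y, l = x :: v ++ [y] := by
  rcases l with _ | ⟨x, t⟩
  · exact Or.inl rfl
  · rcases t.eq_nil_or_concat with rfl | ⟨v, y, rfl⟩
    · exact Or.inr (Or.inl ⟨x, rfl⟩)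
    · exact Or.inr (Or.inr ⟨x, v, y, by simp⟩)

theorem List.exists_eq_replicate_append_append_replicate {α : Type*} {Q : List α → Prop}
    (d : α) (hQ : ∀ v, Q (d :: v ++ [d]) → Q v) (w : List α) (hw : Q w) :
    ∃ n u, w = replicate n d ++ u ++ replicate n d ∧ Q u ∧ ∀ v, u ≠ d :: v ++ [d] := by
  by_cases h : ∃ v, w = d :: v ++ [d]
  · obtain ⟨v, rfl⟩ := h
    obtain ⟨n, u, rfl, hu, hdu⟩ :=
      exists_eq_replicate_append_append_replicate d hQ v (hQ v hw)
    exact ⟨n + 1, u, by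
      nth_rewrite 2 [replicate_succ']; simp [replicate_succ], hu, hdu⟩
  · exact ⟨0, w, (append_nil w).symm, hw, fun v hv => h ⟨v, hv⟩⟩
termination_by w.length

/-- `w` is a little-endian digit string such that `9 * w`, with a carry `a` into its lowest
digit, equals the reversal of `w` with a carry `b` out of its highest digit. -/
def CarryRev9 (a b : ℤ) (w : List ℕ) : Prop :=
  (∀ d ∈ w, d < 10) ∧
    9 * ((Nat.ofDigits 10 w : ℕ) : ℤ) + a = ((Nat.ofDigits 10 w.reverse : ℕ) : ℤ) + b * 10 ^ w.length

namespace CarryRev9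

variable {a b : ℤ} {w v : List ℕ} {x y : ℕ}

theorem of_cons_concat (h : CarryRev9 a b (x :: v ++ [y])) :
    ∃ c, 9 * x + a = y + 10 * c ∧ CarryRev9 c (x + 10 * b - 9 * y) v := by
  obtain ⟨hd, h⟩ := h
  refine ⟨(Nat.ofDigits 10 v.reverse : ℕ) + (x + 10 * b - 9 * y) * 10 ^ v.length -
    9 * (Nat.ofDigits 10 v : ℕ), ?_, fun d hd' => hd d (by simp [hd']), by ring⟩
  simp only [reverse_cons, reverse_append, reverse_nil, nil_append, cons_append,
    Nat.ofDigits_cons, Nat.ofDigits_append, Nat.ofDigits_nil, length_cons,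
    length_nil, length_append, length_reverse] at h
  push_cast at h ⊢
  linear_combination h

theorem carry_out_mem_Icc (h : CarryRev9 a b w) (ha : 0 ≤ a) (ha' : a ≤ 8) :
    b ∈ Set.Icc 0 8 := by
  obtain ⟨hd, h⟩ := h
  have hw : ((Nat.ofDigits 10 w : ℕ) : ℤ) + 1 ≤ 10 ^ w.length := by
    exact_mod_cast Nat.ofDigits_lt_base_pow_length (by norm_num) hd
  have hwr : ((Nat.ofDigits 10 w.reverse : ℕ) : ℤ) + 1 ≤ 10 ^ w.length := by
    rw [← length_reverse]
    exact_mod_cast Nat.ofDigits_lt_base_pow_length (by norm_num) (by simpa using hd)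
  have hpos : (0 : ℤ) < 10 ^ w.length := by positivity
  refine ⟨?_, ?_⟩
  · by_contra! hb
    nlinarith [mul_le_mul_of_nonneg_right (show b ≤ -1 by omega) hpos.le]
  · by_contra! hb
    nlinarith [mul_le_mul_of_nonneg_right (show 9 ≤ b by omega) hpos.le]

theorem step_bounds (h : CarryRev9 a b (x :: v ++ [y])) (ha : 0 ≤ a) (ha' : a ≤ 8) :
    ∃ c, 9 * x + a = y + 10 * c ∧ x < 10 ∧ y < 10 ∧ 0 ≤ x + 10 * b - 9 * y ∧
      x + 10 * b - 9 * y ≤ 8 ∧ CarryRev9 c (x + 10 * b - 9 * y) v := by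
  have hx : x < 10 := h.1 x (by simp)
  have hy : y < 10 := h.1 y (by simp)
  obtain ⟨c, hc, hv⟩ := h.of_cons_concat
  have hb := hv.carry_out_mem_Icc (by omega) (by omega)
  exact ⟨c, hc, hx, hy, hb.1, hb.2, hv⟩

theorem eq_of_nil (h : CarryRev9 a b []) : a = b := by
  simpa [CarryRev9] using h.2

theorem of_singleton {d : ℕ} (h : CarryRev9 a b [d]) : d < 10 ∧ 8 * d + a = 10 * b := by
  refine ⟨h.1 d (mem_singleton_self d), ?_⟩
  have := h.2
  simp only [reverse_singleton, Nat.ofDigits_singleton, length_singleton, pow_one] at this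
  linarith

theorem step_zero_zero (h : CarryRev9 0 0 (x :: v ++ [y])) :
    x = 0 ∧ y = 0 ∧ CarryRev9 0 0 v ∨ x = 9 ∧ y = 1 ∧ CarryRev9 8 0 v := by
  obtain ⟨c, hc, hx, hy, hb, hb', hv⟩ := h.step_bounds le_rfl (by norm_num)
  have : x = 0 ∧ y = 0 ∧ c = 0 ∨ x = 9 ∧ y = 1 ∧ c = 8 := by omega
  rcases this with ⟨rfl, rfl, rfl⟩ | ⟨rfl, rfl, rfl⟩ <;> norm_num at hv ⊢ <;> exact hv

theorem step_eight_zero (h : CarryRev9 8 0 (x :: v ++ [y])) :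
    x = 8 ∧ y = 0 ∧ CarryRev9 8 8 v := by
  obtain ⟨c, hc, hx, hy, hb, hb', hv⟩ := h.step_bounds (by norm_num) le_rfl
  obtain ⟨rfl, rfl, rfl⟩ : x = 8 ∧ y = 0 ∧ c = 8 := by omega
  norm_num at hv ⊢
  exact hv

theorem step_eight_eight (h : CarryRev9 8 8 (x :: v ++ [y])) :
    x = 9 ∧ y = 9 ∧ CarryRev9 8 8 v ∨ x = 0 ∧ y = 8 ∧ CarryRev9 0 8 v := by
  obtain ⟨c, hc, hx, hy, hb, hb', hv⟩ := h.step_bounds (by norm_num) le_rfl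
  have : x = 9 ∧ y = 9 ∧ c = 8 ∨ x = 0 ∧ y = 8 ∧ c = 0 := by omega
  rcases this with ⟨rfl, rfl, rfl⟩ | ⟨rfl, rfl, rfl⟩ <;> norm_num at hv ⊢ <;> exact hv

theorem step_zero_eight (h : CarryRev9 0 8 (x :: v ++ [y])) :
    x = 1 ∧ y = 9 ∧ CarryRev9 0 0 v := by
  obtain ⟨c, hc, hx, hy, hb, hb', hv⟩ := h.step_bounds le_rfl (by norm_num)
  obtain ⟨rfl, rfl, rfl⟩ : x = 1 ∧ y = 9 ∧ c = 0 := by omega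
  norm_num at hv ⊢
  exact hv

theorem eq_replicate_zero_or (h : CarryRev9 0 0 w) :
    (∃ n, w = replicate n 0) ∨
      ∃ m v, w = replicate m 0 ++ (9 :: v ++ [1]) ++ replicate m 0 ∧ CarryRev9 8 0 v := by
  have peel (v : List ℕ) (hv : CarryRev9 0 0 (0 :: v ++ [0])) : CarryRev9 0 0 v := by
    rcases hv.step_zero_zero with ⟨-, -, hv⟩ | ⟨h9, -⟩
    exacts [hv, absurd h9 (by norm_num)]
  obtain ⟨m, u, rfl, hu, hu0⟩ := exists_eq_replicate_append_append_replicate 0 peel w h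
  rcases u.eq_nil_or_eq_singleton_or_eq_cons_concat with rfl | ⟨d, rfl⟩ | ⟨x, v, y, rfl⟩
  · exact Or.inl ⟨m + m, by rw [replicate_add, append_nil]⟩
  · obtain rfl : d = 0 := by have := hu.of_singleton; omega
    exact Or.inl ⟨m + 1 + m, by rw [replicate_add, replicate_succ']⟩
  · rcases hu.step_zero_zero with ⟨rfl, rfl, -⟩ | ⟨rfl, rfl, hv⟩
    · exact absurd rfl (hu0 v)
    · exact Or.inr ⟨m, v, rfl, hv⟩

theorem eq_replicate_nine_or (h : CarryRev9 8 8 w) :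
    (∃ n, w = replicate n 9) ∨
      ∃ a v, w = replicate a 9 ++ (0 :: v ++ [8]) ++ replicate a 9 ∧ CarryRev9 0 8 v := by
  have peel (v : List ℕ) (hv : CarryRev9 8 8 (9 :: v ++ [9])) : CarryRev9 8 8 v := by
    rcases hv.step_eight_eight with ⟨-, -, hv⟩ | ⟨h0, -⟩
    exacts [hv, absurd h0 (by norm_num)]
  obtain ⟨a, u, rfl, hu, hu9⟩ := exists_eq_replicate_append_append_replicate 9 peel w h
  rcases u.eq_nil_or_eq_singleton_or_eq_cons_concat with rfl | ⟨d, rfl⟩ | ⟨x, v, y, rfl⟩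
  · exact Or.inl ⟨a + a, by rw [replicate_add, append_nil]⟩
  · obtain rfl : d = 9 := by have := hu.of_singleton; omega
    exact Or.inl ⟨a + 1 + a, by rw [replicate_add, replicate_succ']⟩
  · rcases hu.step_eight_eight with ⟨rfl, rfl, -⟩ | ⟨rfl, rfl, hv⟩
    · exact absurd rfl (hu9 v)
    · exact Or.inr ⟨a, v, rfl, hv⟩

theorem eq_eight_cons_concat_zero (h : CarryRev9 8 0 w) :
    ∃ v, w = 8 :: v ++ [0] ∧ CarryRev9 8 8 v := by
  rcases w.eq_nil_or_eq_singleton_or_eq_cons_concat with rfl | ⟨d, rfl⟩ | ⟨x, v, y, rfl⟩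
  · exact absurd h.eq_of_nil (by norm_num)
  · have := h.of_singleton; omega
  · obtain ⟨rfl, rfl, hv⟩ := h.step_eight_zero
    exact ⟨v, rfl, hv⟩

theorem eq_one_cons_concat_nine (h : CarryRev9 0 8 w) :
    ∃ v, w = 1 :: v ++ [9] ∧ CarryRev9 0 0 v := by
  rcases w.eq_nil_or_eq_singleton_or_eq_cons_concat with rfl | ⟨d, rfl⟩ | ⟨x, v, y, rfl⟩
  · exact absurd h.eq_of_nil (by norm_num)
  · have := h.of_singleton; omega
  · obtain ⟨rfl, rfl, hv⟩ := h.step_zero_eight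
    exact ⟨v, rfl, hv⟩

end CarryRev9

def IsBlockPalindrome (t : List ℕ) : Prop :=
  ∃ i, 1 ≤ i ∧ ∃ l m : ℕ → ℕ, t = evenString9 i l m ∨ t = oddString9 i l m

theorem isBlockPalindrome_cBlock9 (a : ℕ) : IsBlockPalindrome (cBlock9 a) :=
  ⟨1, le_rfl, fun _ => a, fun _ => 0, Or.inr (by simp [oddString9])⟩

theorem isBlockPalindrome_cBlock9_append_zBlock_append_cBlock9 (a m : ℕ) :
    IsBlockPalindrome (cBlock9 a ++ zBlock m ++ cBlock9 a) :=
  ⟨1, le_rfl, fun _ => a, fun _ => m, Or.inl (by simp [evenString9])⟩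

theorem IsBlockPalindrome.sandwich {t : List ℕ} (h : IsBlockPalindrome t) (a m : ℕ) :
    IsBlockPalindrome (cBlock9 a ++ zBlock m ++ t ++ zBlock m ++ cBlock9 a) := by
  obtain ⟨i, hi, l, k, ht⟩ := h
  obtain ⟨i, rfl⟩ := Nat.exists_eq_add_of_le' hi
  refine ⟨i + 2, by omega, fun j => if j = 1 then a else l (j - 1),
    fun j => if j = 1 then m else k (j - 1), ?_⟩
  rcases ht with rfl | rfl
  · left
    simp [evenString9, range_succ_eq_map, Function.comp_def]
  · right
    simp [oddString9, range_succ_eq_map, Function.comp_def]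

theorem CarryRev9.isBlockPalindrome {v : List ℕ} (h : CarryRev9 8 0 v) :
    IsBlockPalindrome (1 :: v.reverse ++ [9]) := by
  obtain ⟨w, rfl, hw⟩ := h.eq_eight_cons_concat_zero
  rcases hw.eq_replicate_nine_or with ⟨n, rfl⟩ | ⟨a, u, rfl, hu⟩
  · convert isBlockPalindrome_cBlock9 n using 1
    simp [cBlock9]
  obtain ⟨r, rfl, hr⟩ := hu.eq_one_cons_concat_nine
  rcases hr.eq_replicate_zero_or with ⟨n, rfl⟩ | ⟨m, v, rfl, hv⟩
  · convert isBlockPalindrome_cBlock9_append_zBlock_append_cBlock9 a n using 1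
    simp [cBlock9, zBlock]
  · convert hv.isBlockPalindrome.sandwich a m using 1
    simp [cBlock9, zBlock]
termination_by v.length

/-- Every positive `(10, 9)`-reverse multiple has a big-endian decimal digit string
which is one of the two palindromic block concatenations built from blocks
`C_j = 10 9…9 89` (with `l j` nines) and zero blocks `Z_j` (of `m j` zeros). -/
theorem stmt_17 (M : ℕ) (hM : 0 < M)
    (hrev : (Nat.digits 10 M).reverse = Nat.digits 10 (9 * M)) :
    ∃ i : ℕ, 1 ≤ i ∧ ∃ l m : ℕ → ℕ,
      (Nat.digits 10 M).reverse = evenString9 i l m ∨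
      (Nat.digits 10 M).reverse = oddString9 i l m := by
  have hs : CarryRev9 0 0 (Nat.digits 10 M) := by
    refine ⟨fun d hd => Nat.digits_lt_base (by norm_num) hd, ?_⟩
    rw [hrev, Nat.ofDigits_digits, Nat.ofDigits_digits]
    push_cast
    ring
  have hlast : (Nat.digits 10 M).getLast? ≠ some 0 := by
    rw [getLast?_eq_some_getLast (Nat.digits_ne_nil_iff_ne_zero.mpr hM.ne')]
    simpa using Nat.getLast_digit_ne_zero 10 hM.ne'
  rcases hs.eq_replicate_zero_or with ⟨n, hn⟩ | ⟨m, v, hv, h80⟩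
  · have hM0 := Nat.ofDigits_digits 10 M
    rw [hn, Nat.ofDigits_replicate_zero] at hM0
    omega
  · obtain rfl : m = 0 := by
      rcases m with _ | m
      · rfl
      · simp [hv, getLast?_cons, replicate_succ'] at hlast
    have hv' : (Nat.digits 10 M).reverse = 1 :: v.reverse ++ [9] := by simp [hv]
    exact hv' ▸ h80.isBlockPalindrome
end
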